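/- arXiv:2602.09505 — 3 statements merged into one kernel-verified Lean document; each statement's English description precedes it below -/
import Mathlib

section
/- Assume the singular value expansion setting. Then the Hilbert-space adjoint of T factors as T* = V ∘ M_σ ∘ W*, i.e., for every g ∈ G one has T* g = V(σ · (W* g)), where σ · (W* g) denotes the pointwise product in L²(μ). -/
open MeasureTheory RealInnerProductSpace

theorem L2.inner_eq_inner_of_ae_eq_mul {α : Type*} [MeasurableSpace α] {μ : Measure α}
    (σ : α → ℝ) {u v h w : Lp ℝ 2 μ}
    (hv : ⇑v =ᵐ[μ] fun x => σ x * u x) (hw : ⇑w =ᵐ[μ] fun x => σ x * h x) :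
    ⟪h, v⟫ = ⟪w, u⟫ := by
  rw [L2.inner_def, L2.inner_def]
  refine integral_congr_ae ?_
  filter_upwards [hv, hw] with x hvx hwx
  simp only [RCLike.inner_apply, conj_trivial, hvx, hwx]
  ring

theorem adjoint_factorization_general
    {𝓜 : Type} [MeasurableSpace 𝓜] {μ : Measure 𝓜}
    {F G : Type} [NormedAddCommGroup F] [InnerProductSpace ℝ F] [CompleteSpace F]
    [NormedAddCommGroup G] [InnerProductSpace ℝ G] [CompleteSpace G]
    (σ : 𝓜 → ℝ) (hσ_bdd : MemLp σ ⊤ μ)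
    (V : Lp ℝ 2 μ ≃ₗᵢ[ℝ] F) (W : Lp ℝ 2 μ →ₗᵢ[ℝ] G)
    (T : F →L[ℝ] G)
    (hT : ∀ u : Lp ℝ 2 μ, ∃ v : Lp ℝ 2 μ,
      (⇑v =ᵐ[μ] fun x => σ x * u x) ∧ T (V u) = W v)
    (g : G) :
    ∃ u : Lp ℝ 2 μ,
      (⇑u =ᵐ[μ] fun x => σ x *
        (ContinuousLinearMap.adjoint W.toContinuousLinearMap g) x) ∧
      ContinuousLinearMap.adjoint T g = V u := by
  set h : Lp ℝ 2 μ := ContinuousLinearMap.adjoint W.toContinuousLinearMap g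
  have hmem : MemLp (σ • ⇑h) 2 μ := (Lp.memLp h).smul hσ_bdd
  refine ⟨hmem.toLp _, hmem.coeFn_toLp, ext_inner_right ℝ fun f => ?_⟩
  obtain ⟨w, rfl⟩ := V.surjective f
  obtain ⟨v, hv, hTw⟩ := hT w
  calc ⟪ContinuousLinearMap.adjoint T g, V w⟫
      = ⟪g, W v⟫ := by rw [ContinuousLinearMap.adjoint_inner_left, hTw]
    _ = ⟪h, v⟫ := (ContinuousLinearMap.adjoint_inner_left W.toContinuousLinearMap v g).symm
    _ = ⟪hmem.toLp _, w⟫ := L2.inner_eq_inner_of_ae_eq_mul σ hv hmem.coeFn_toLp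
    _ = ⟪V (hmem.toLp _), V w⟫ := (V.inner_map_map _ _).symm

/-- In the singular value expansion setting, the adjoint factors as
`T* = V ∘ M_σ ∘ W*`: for every `g ∈ G`, `T* g = V(σ · (W* g))`. -/
theorem adjoint_factorization
    {𝓜 : Type} [MeasurableSpace 𝓜] {μ : Measure 𝓜}
    {F G : Type} [NormedAddCommGroup F] [InnerProductSpace ℝ F] [CompleteSpace F]
    [NormedAddCommGroup G] [InnerProductSpace ℝ G] [CompleteSpace G]
    (σ : 𝓜 → ℝ) (hσ_meas : Measurable σ) (hσ_bdd : MemLp σ ⊤ μ)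
    (hσ_pos : ∀ᵐ x ∂μ, 0 < σ x)
    (V : Lp ℝ 2 μ ≃ₗᵢ[ℝ] F) (W : Lp ℝ 2 μ →ₗᵢ[ℝ] G)
    (T : F →L[ℝ] G)
    (hT : ∀ u : Lp ℝ 2 μ, ∃ v : Lp ℝ 2 μ,
      (⇑v =ᵐ[μ] fun x => σ x * u x) ∧ T (V u) = W v)
    (g : G) :
    ∃ u : Lp ℝ 2 μ,
      (⇑u =ᵐ[μ] fun x => σ x *
        (ContinuousLinearMap.adjoint W.toContinuousLinearMap g) x) ∧
      ContinuousLinearMap.adjoint T g = V u :=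
  adjoint_factorization_general σ hσ_bdd V W T hT g
end

section
/- Let (𝓜, μ) be a measure space and σ : 𝓜 → ℝ measurable, essentially bounded, with σ(x) > 0 for μ-a.e. x. Then the multiplication operator M_σ : L²(μ) → L²(μ), u ↦ σ·u, has dense range in L²(μ). Consequently, in the singular value expansion setting the range of W equals the closure of the range of T, and hence ker T* = ker W* = (ran T)^⊥. -/
/-!
If `v ∈ L²` is orthogonal to `σ · L²`, testing against `σ v` gives `∫ σ v² = 0`, so `v = 0`
because `σ > 0` a.e.; hence `σ · L²` is dense. As `V` is onto and `T V = W M_σ`,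
`ran T = W (σ · L²)`, whose closure is `ran W` since `W` is an isometry. Finally, ranges with
the same closure have the same orthogonal complement, i.e. the adjoints have the same kernel.
-/

open MeasureTheory

theorem ae_eq_zero_of_integral_mul_sq_eq_zero {𝓜 : Type*} [MeasurableSpace 𝓜]
    {μ : Measure 𝓜} {σ f : 𝓜 → ℝ} (hσ_pos : ∀ᵐ x ∂μ, 0 < σ x)
    (hint : Integrable (fun x => σ x * f x ^ 2) μ) (h : ∫ x, σ x * f x ^ 2 ∂μ = 0) :
    f =ᵐ[μ] 0 := by
  have hnonneg : 0 ≤ᵐ[μ] fun x => σ x * f x ^ 2 := by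
    filter_upwards [hσ_pos] with x hx using by positivity
  filter_upwards [(integral_eq_zero_iff_of_nonneg_ae hnonneg hint).mp h, hσ_pos] with x h0 hx
  simpa [hx.ne'] using h0

namespace MeasureTheory.Lp

variable {𝓜 : Type*} [MeasurableSpace 𝓜]

def mulRange (p : ENNReal) (μ : Measure 𝓜) (σ : 𝓜 → ℝ) : Submodule ℝ (Lp ℝ p μ) where
  carrier := {v | ∃ u : Lp ℝ p μ, ⇑v =ᵐ[μ] fun x => σ x * u x}
  zero_mem' := ⟨0, by
    filter_upwards [Lp.coeFn_zero ℝ p μ] with x hx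
    rw [hx, Pi.zero_apply, mul_zero]⟩
  add_mem' := by
    rintro v₁ v₂ ⟨u₁, h₁⟩ ⟨u₂, h₂⟩
    refine ⟨u₁ + u₂, ?_⟩
    filter_upwards [h₁, h₂, Lp.coeFn_add v₁ v₂, Lp.coeFn_add u₁ u₂] with x e₁ e₂ e₃ e₄
    simp only [Pi.add_apply] at e₃ e₄
    rw [e₃, e₁, e₂, e₄, mul_add]
  smul_mem' := by
    rintro c v ⟨u, h⟩
    refine ⟨c • u, ?_⟩
    filter_upwards [h, Lp.coeFn_smul c v, Lp.coeFn_smul c u] with x e₁ e₂ e₃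
    simp only [Pi.smul_apply, smul_eq_mul] at e₂ e₃
    rw [e₂, e₁, e₃, mul_left_comm]

variable {μ : Measure 𝓜} {p : ENNReal} {σ : 𝓜 → ℝ}

theorem orthogonal_mulRange_eq_bot (hσ_bdd : MemLp σ ⊤ μ) (hσ_pos : ∀ᵐ x ∂μ, 0 < σ x) :
    (mulRange 2 μ σ)ᗮ = ⊥ := by
  refine (Submodule.eq_bot_iff _).mpr fun v hv => ?_
  have hσv : MemLp (σ • ⇑v) 2 μ := (Lp.memLp v).smul (r := 2) hσ_bdd
  set w : Lp ℝ 2 μ := hσv.toLp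
  have hw : ⇑w =ᵐ[μ] fun x => σ x * v x := hσv.coeFn_toLp
  have hpointwise : (fun x => inner ℝ (w x) (v x)) =ᵐ[μ] fun x => σ x * v x ^ 2 := by
    filter_upwards [hw] with x hx
    simp only [hx, RCLike.inner_apply, conj_trivial]
    ring
  have hint : Integrable (fun x => σ x * v x ^ 2) μ :=
    (L2.integrable_inner (𝕜 := ℝ) _ v).congr hpointwise
  have hzero : ∫ x, σ x * v x ^ 2 ∂μ = 0 := by
    rw [← integral_congr_ae hpointwise, ← L2.inner_def]
    exact (Submodule.mem_orthogonal _ v).mp hv _ ⟨v, hw⟩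
  rw [Lp.eq_zero_iff_ae_eq_zero]
  exact ae_eq_zero_of_integral_mul_sq_eq_zero hσ_pos hint hzero

theorem dense_mulRange (hσ_bdd : MemLp σ ⊤ μ) (hσ_pos : ∀ᵐ x ∂μ, 0 < σ x) :
    Dense (mulRange 2 μ σ : Set (Lp ℝ 2 μ)) :=
  Submodule.dense_iff_topologicalClosure_eq_top.mpr
    (Submodule.topologicalClosure_eq_top_iff.mpr (orthogonal_mulRange_eq_bot hσ_bdd hσ_pos))

theorem range_eq_image_mulRange {F G : Type*} (V : Lp ℝ p μ ≃ F) (W : Lp ℝ p μ → G)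
    (T : F → G)
    (hT : ∀ u : Lp ℝ p μ, ∃ v : Lp ℝ p μ, (⇑v =ᵐ[μ] fun x => σ x * u x) ∧ T (V u) = W v) :
    Set.range T = W '' mulRange p μ σ := by
  ext y
  constructor
  · rintro ⟨f, rfl⟩
    obtain ⟨v, hv, hTv⟩ := hT (V.symm f)
    exact ⟨v, ⟨V.symm f, hv⟩, by rw [← hTv, V.apply_symm_apply]⟩
  · rintro ⟨v, ⟨u, hu⟩, rfl⟩
    obtain ⟨v', hv', hTv'⟩ := hT u
    have hvv' : v = v' := Lp.ext (hu.trans hv'.symm)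
    exact ⟨V u, by rw [hTv', hvv']⟩

end MeasureTheory.Lp

namespace ContinuousLinearMap

variable {E F G : Type*} [NormedAddCommGroup E] [InnerProductSpace ℝ E] [CompleteSpace E]
  [NormedAddCommGroup F] [InnerProductSpace ℝ F] [CompleteSpace F]
  [NormedAddCommGroup G] [InnerProductSpace ℝ G] [CompleteSpace G]

theorem ker_adjoint_eq_of_range_eq_closure {S : E →L[ℝ] G} {T : F →L[ℝ] G}
    (h : Set.range S = closure (Set.range T)) :
    LinearMap.ker (adjoint S : G →ₗ[ℝ] E) = LinearMap.ker (adjoint T : G →ₗ[ℝ] F) := by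
  have hS : LinearMap.range (S : E →ₗ[ℝ] G) =
      (LinearMap.range (T : F →ₗ[ℝ] G)).topologicalClosure := SetLike.ext' (by
    rw [Submodule.topologicalClosure_coe, LinearMap.coe_range, LinearMap.coe_range, coe_coe]
    exact h)
  rw [← orthogonal_range, ← orthogonal_range, hS, Submodule.orthogonal_closure]

end ContinuousLinearMap

theorem multiplication_dense_range_and_kernels_general
    {𝓜 : Type} [MeasurableSpace 𝓜] {μ : Measure 𝓜}
    {F G : Type} [NormedAddCommGroup F] [InnerProductSpace ℝ F] [CompleteSpace F]
    [NormedAddCommGroup G] [InnerProductSpace ℝ G] [CompleteSpace G]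
    (σ : 𝓜 → ℝ) (hσ_bdd : MemLp σ ⊤ μ)
    (hσ_pos : ∀ᵐ x ∂μ, 0 < σ x)
    (V : Lp ℝ 2 μ ≃ₗᵢ[ℝ] F) (W : Lp ℝ 2 μ →ₗᵢ[ℝ] G)
    (T : F →L[ℝ] G)
    (hT : ∀ u : Lp ℝ 2 μ, ∃ v : Lp ℝ 2 μ,
      (⇑v =ᵐ[μ] fun x => σ x * u x) ∧ T (V u) = W v) :
    Dense {v : Lp ℝ 2 μ | ∃ u : Lp ℝ 2 μ, ⇑v =ᵐ[μ] fun x => σ x * u x} ∧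
    Set.range W = closure (Set.range T) ∧
    LinearMap.ker (ContinuousLinearMap.adjoint T : G →ₗ[ℝ] F) =
      LinearMap.ker (ContinuousLinearMap.adjoint W.toContinuousLinearMap : G →ₗ[ℝ] Lp ℝ 2 μ) ∧
    LinearMap.ker (ContinuousLinearMap.adjoint T : G →ₗ[ℝ] F) = (LinearMap.range (T : F →ₗ[ℝ] G))ᗮ := by
  have hdense := Lp.dense_mulRange hσ_bdd hσ_pos
  have hrange : Set.range W = closure (Set.range T) := by
    rw [Lp.range_eq_image_mulRange V.toLinearEquiv.toEquiv W T hT,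
      W.isometry.isClosedEmbedding.closure_image_eq, hdense.closure_eq, Set.image_univ]
  exact ⟨hdense, hrange,
    (ContinuousLinearMap.ker_adjoint_eq_of_range_eq_closure
      (S := W.toContinuousLinearMap) hrange).symm,
    T.orthogonal_range.symm⟩

/-- Multiplication by an a.e. positive, essentially bounded `σ` has dense
range in `L²(μ)`; consequently, in the singular value expansion setting,
`ran W = closure (ran T)` and `ker T* = ker W* = (ran T)ᗮ`. -/
theorem multiplication_dense_range_and_kernels
    {𝓜 : Type} [MeasurableSpace 𝓜] {μ : Measure 𝓜}
    {F G : Type} [NormedAddCommGroup F] [InnerProductSpace ℝ F] [CompleteSpace F]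
    [NormedAddCommGroup G] [InnerProductSpace ℝ G] [CompleteSpace G]
    (σ : 𝓜 → ℝ) (hσ_meas : Measurable σ) (hσ_bdd : MemLp σ ⊤ μ)
    (hσ_pos : ∀ᵐ x ∂μ, 0 < σ x)
    (V : Lp ℝ 2 μ ≃ₗᵢ[ℝ] F) (W : Lp ℝ 2 μ →ₗᵢ[ℝ] G)
    (T : F →L[ℝ] G)
    (hT : ∀ u : Lp ℝ 2 μ, ∃ v : Lp ℝ 2 μ,
      (⇑v =ᵐ[μ] fun x => σ x * u x) ∧ T (V u) = W v) :
    Dense {v : Lp ℝ 2 μ | ∃ u : Lp ℝ 2 μ, ⇑v =ᵐ[μ] fun x => σ x * u x} ∧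
    Set.range W = closure (Set.range T) ∧
    LinearMap.ker (ContinuousLinearMap.adjoint T : G →ₗ[ℝ] F) =
      LinearMap.ker (ContinuousLinearMap.adjoint W.toContinuousLinearMap : G →ₗ[ℝ] Lp ℝ 2 μ) ∧
    LinearMap.ker (ContinuousLinearMap.adjoint T : G →ₗ[ℝ] F) = (LinearMap.range (T : F →ₗ[ℝ] G))ᗮ :=
  multiplication_dense_range_and_kernels_general σ hσ_bdd hσ_pos V W T hT
end

section
/- Let F and G be real Hilbert spaces, (eₙ)_{n∈ℕ} a Hilbert (orthonormal) basis of F, (gₙ)_{n∈ℕ} an orthonormal family in G, and (σₙ)_{n∈ℕ} a bounded sequence of positive reals. Let T : F → G be the bounded operator T f = Σₙ σₙ ⟨eₙ, f⟩ gₙ. Let q : ℝ₊* × ℝ₊ → ℝ satisfy |q(α, σₙ)| ≤ M for all α > 0, n ∈ ℕ and some constant M, and lim_{α→0⁺} q(α, σₙ) = 1 for every n. Then for every f ∈ F, the elements f_α := Σₙ q(α, σₙ) ⟨eₙ, f⟩ eₙ are well defined, f_α = R_α(Tf) where R_α g = Σₙ (q(α,σₙ)/σₙ)⟨gₙ, g⟩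 eₙ, and ‖f_α − f‖_F → 0 as α → 0⁺. -/
open Filter Topology

/-!
With `cₙ = ⟨eₙ, f⟩`, Parseval's identity gives
`‖f_α - f‖² = Σₙ |q(α, σₙ) - 1|² |cₙ|²`, and each term tends to `0` while being dominated by
`(M + 1)² |cₙ|²`, so dominated convergence for series finishes. The identity `f_α = R_α (T f)`
is a matching of coefficients, since `⟨gₙ, T f⟩ = σₙ cₙ`.
-/

section Orthonormal

variable {𝕜 E ι : Type*} [RCLike 𝕜] [NormedAddCommGroup E] [InnerProductSpace 𝕜 E]
  {v : ι → E} {a : ι → 𝕜} {x : E}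

theorem Orthonormal.inner_left_eq_of_hasSum (hv : Orthonormal 𝕜 v)
    (h : HasSum (fun j => a j • v j) x) (i : ι) : inner 𝕜 (v i) x = a i := by
  have hsingle : HasSum (fun j => innerSL 𝕜 (v i) (a j • v j)) (a i) := by
    convert hasSum_single (f := fun j => innerSL 𝕜 (v i) (a j • v j)) i fun j hj => ?_
    · simp [hv.norm_eq_one]
    · simp [hv.inner_eq_zero (Ne.symm hj)]
  simpa using (h.mapL (innerSL 𝕜 (v i))).unique hsingle

theorem Orthonormal.hasSum_norm_sq_of_hasSum (hv : Orthonormal 𝕜 v)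
    (h : HasSum (fun i => a i • v i) x) : HasSum (fun i => ‖a i‖ ^ 2) (‖x‖ ^ 2) := by
  unfold HasSum at h ⊢
  refine (h.norm.pow 2).congr fun s => ?_
  simpa using hv.orthogonalFamily.norm_sum a s

end Orthonormal

namespace HilbertBasis

variable {𝕜 E ι : Type*} [RCLike 𝕜] [NormedAddCommGroup E] [InnerProductSpace 𝕜 E]
  (b : HilbertBasis ι 𝕜 E) {m : ι → 𝕜} {M : ℝ}

theorem summable_mul_inner_smul (hm : ∀ i, ‖m i‖ ≤ M) (x : E) :
    Summable fun i => (m i * inner 𝕜 (b i) x) • b i := by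
  have hw : Memℓp (fun i => m i * b.repr x i) 2 :=
    ((lp.memℓp (b.repr x)).norm.const_mul M).mono fun i =>
      (norm_mul _ _).trans_le (mul_le_mul_of_nonneg_right (hm i) (norm_nonneg _))
  simpa [b.repr_apply_apply] using (b.hasSum_repr_symm ⟨_, hw⟩).summable

theorem norm_tsum_mul_inner_smul_sub_sq (hm : ∀ i, ‖m i‖ ≤ M) (x : E) :
    ‖(∑' i, (m i * inner 𝕜 (b i) x) • b i) - x‖ ^ 2 =
      ∑' i, ‖(m i - 1) * inner 𝕜 (b i) x‖ ^ 2 := by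
  have hdiff : HasSum (fun i => ((m i - 1) * inner 𝕜 (b i) x) • b i)
      ((∑' i, (m i * inner 𝕜 (b i) x) • b i) - x) := by
    convert (b.summable_mul_inner_smul hm x).hasSum.sub (b.hasSum_repr x) using 1
    ext i
    rw [b.repr_apply_apply, sub_mul, one_mul, sub_smul]
  exact (b.orthonormal.hasSum_norm_sq_of_hasSum hdiff).tsum_eq.symm

theorem tendsto_tsum_mul_inner_smul {α : Type*} {l : Filter α} {m : α → ι → 𝕜}
    (hm : ∀ᶠ a in l, ∀ i, ‖m a i‖ ≤ M) (hlim : ∀ i, Tendsto (m · i) l (𝓝 1)) (x : E) :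
    Tendsto (fun a => ∑' i, (m a i * inner 𝕜 (b i) x) • b i) l (𝓝 x) := by
  have hsq : Tendsto (fun a => ∑' i, ‖(m a i - 1) * inner 𝕜 (b i) x‖ ^ 2) l (𝓝 0) := by
    have hbound : ∀ᶠ a in l, ∀ i,
        ‖‖(m a i - 1) * inner 𝕜 (b i) x‖ ^ 2‖ ≤ (M + 1) ^ 2 * ‖inner 𝕜 (b i) x‖ ^ 2 := by
      filter_upwards [hm] with a ha i
      rw [norm_pow, norm_norm, norm_mul, mul_pow]
      gcongr
      exact (norm_sub_le _ _).trans (by simpa using ha i)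
    have hpointwise : ∀ i, Tendsto (fun a => ‖(m a i - 1) * inner 𝕜 (b i) x‖ ^ 2) l (𝓝 0) :=
      fun i => by simpa using ((((hlim i).sub_const 1).mul_const (inner 𝕜 (b i) x)).norm.pow 2)
    simpa using tendsto_tsum_of_dominated_convergence
      ((b.orthonormal.inner_products_summable x).mul_left _) hpointwise hbound
  rw [tendsto_iff_norm_sub_tendsto_zero]
  have hnorm : ∀ᶠ a in l, ‖(∑' i, (m a i * inner 𝕜 (b i) x) • b i) - x‖ =
      √(∑' i, ‖(m a i - 1) * inner 𝕜 (b i) x‖ ^ 2) := by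
    filter_upwards [hm] with a ha
    rw [← b.norm_tsum_mul_inner_smul_sub_sq ha, Real.sqrt_sq (norm_nonneg _)]
  simpa using hsq.sqrt.congr' (hnorm.mono fun a ha => ha.symm)

end HilbertBasis

theorem series_regularization_converges_general
    {F G : Type} [NormedAddCommGroup F] [InnerProductSpace ℝ F]
    [NormedAddCommGroup G] [InnerProductSpace ℝ G]
    (e : HilbertBasis ℕ ℝ F) (g' : ℕ → G) (hg' : Orthonormal ℝ g')
    (σn : ℕ → ℝ) (hσn : ∀ n, 0 < σn n)
    (T : F →L[ℝ] G)
    (hT : ∀ f : F, HasSum (fun n => (σn n * inner (𝕜 := ℝ) (e n : F) f) • g' n) (T f))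
    (q : ℝ → ℝ → ℝ) (M : ℝ)
    (hA1 : ∀ α : ℝ, 0 < α → ∀ n : ℕ, |q α (σn n)| ≤ M)
    (hA3 : ∀ n : ℕ, Tendsto (fun α => q α (σn n)) (𝓝[>] 0) (𝓝 1))
    (f : F) :
    (∀ α : ℝ, 0 < α →
      Summable (fun n => (q α (σn n) * inner (𝕜 := ℝ) (e n : F) f) • (e n : F))) ∧
    (∀ α : ℝ, 0 < α →
      (∑' n, (q α (σn n) * inner (𝕜 := ℝ) (e n : F) f) • (e n : F)) =
      ∑' n, (q α (σn n) / σn n * inner (𝕜 := ℝ) (g' n) (T f)) • (e n : F)) ∧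
    Tendsto
      (fun α => ‖(∑' n, (q α (σn n) * inner (𝕜 := ℝ) (e n : F) f) • (e n : F)) - f‖)
      (𝓝[>] 0) (𝓝 0) := by
  have hq : ∀ α : ℝ, 0 < α → ∀ n, ‖q α (σn n)‖ ≤ M := fun α hα n =>
    (Real.norm_eq_abs _).trans_le (hA1 α hα n)
  have hTf : ∀ n, inner ℝ (g' n) (T f) = σn n * inner ℝ (e n) f :=
    hg'.inner_left_eq_of_hasSum (hT f)
  refine ⟨fun α hα => e.summable_mul_inner_smul (hq α hα) f, fun α _ => ?_, ?_⟩
  · refine tsum_congr fun n => ?_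
    rw [hTf, ← mul_assoc, div_mul_cancel₀ _ (hσn n).ne']
  · exact tendsto_iff_norm_sub_tendsto_zero.1 <|
      e.tendsto_tsum_mul_inner_smul (eventually_nhdsWithin_of_forall hq) hA3 f

/-- Compact-operator (series) form of the convergence of spectral
regularization: under (A1) and (A3), the regularized elements
`f_α = Σₙ q(α,σₙ)⟨eₙ,f⟩eₙ` are well defined, equal `R_α (T f)` with
`R_α g = Σₙ (q(α,σₙ)/σₙ)⟨gₙ,g⟩eₙ`, and converge to `f` as `α → 0⁺`. -/
theorem series_regularization_converges
    {F G : Type} [NormedAddCommGroup F] [InnerProductSpace ℝ F] [CompleteSpace F]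
    [NormedAddCommGroup G] [InnerProductSpace ℝ G] [CompleteSpace G]
    (e : HilbertBasis ℕ ℝ F) (g' : ℕ → G) (hg' : Orthonormal ℝ g')
    (σn : ℕ → ℝ) (hσn : ∀ n, 0 < σn n) (C : ℝ) (hσn_bdd : ∀ n, σn n ≤ C)
    (T : F →L[ℝ] G)
    (hT : ∀ f : F, HasSum (fun n => (σn n * inner (𝕜 := ℝ) (e n : F) f) • g' n) (T f))
    (q : ℝ → ℝ → ℝ) (M : ℝ)
    (hA1 : ∀ α : ℝ, 0 < α → ∀ n : ℕ, |q α (σn n)| ≤ M)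
    (hA3 : ∀ n : ℕ, Tendsto (fun α => q α (σn n)) (𝓝[>] 0) (𝓝 1))
    (f : F) :
    (∀ α : ℝ, 0 < α →
      Summable (fun n => (q α (σn n) * inner (𝕜 := ℝ) (e n : F) f) • (e n : F))) ∧
    (∀ α : ℝ, 0 < α →
      (∑' n, (q α (σn n) * inner (𝕜 := ℝ) (e n : F) f) • (e n : F)) =
      ∑' n, (q α (σn n) / σn n * inner (𝕜 := ℝ) (g' n) (T f)) • (e n : F)) ∧
    Tendsto
      (fun α => ‖(∑' n, (q α (σn n) * inner (𝕜 := ℝ) (e n : F) f) • (e n : F)) - f‖)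
      (𝓝[>] 0) (𝓝 0) :=
  series_regularization_converges_general e g' hg' σn hσn T hT q M hA1 hA3 f
end
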